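/- Let p∈U_δ(p₀). If φ(q₀(p))=0, then the function f(q) = φ(q)/(M(p)−w_p(q)) belongs to L²(T³). -/

import Mathlib

open MeasureTheory Real Filter Topology

noncomputable section

/-- The 3-torus `T³ = (ℝ/2πℤ)³` is modeled as `ℝ³ = Fin 3 → ℝ`; all functions involved
are required to be `2π`-periodic in each variable. -/
abbrev 𝕋 : Type := Fin 3 → ℝ

/-- The shift by `2π` times an integer vector (a period of the torus). -/
def shift (v : Fin 3 → ℤ) : 𝕋 := fun i => 2 * Real.pi * (v i)

/-- A fundamental domain `(-π, π]³` of the torus, used as the integration domain. -/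
def box : Set 𝕋 := Set.univ.pi fun _ => Set.Ioc (-Real.pi) Real.pi

/-! Every maximum point of `w_p` is a translate `q0 p + shift v`, and there the nondegenerate
maximum gives `M(p) − w_p(q0 p + y) ≥ c‖y‖²`, while `φ(q0 p + y) = O(‖y‖)` because `φ` vanishes
at `q0 p`. By periodicity `f = O(‖q − z‖⁻¹)` near every maximum point `z`, so `f²` is dominated by
`‖q − z‖⁻²`, which is locally integrable in dimension three. Elsewhere `f` is continuous, so `f²` is
locally integrable on all of `ℝ³`, hence integrable on the compact closure of `box`. -/

open Asymptotics

section Analysis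

variable {E : Type*} [NormedAddCommGroup E] [NormedSpace ℝ E]

theorem ContinuousMultilinearMap.exists_pos_apply_diag_le_neg_mul_norm_sq [FiniteDimensional ℝ E]
    (Q : ContinuousMultilinearMap ℝ (fun _ : Fin 2 => E) ℝ)
    (hQ : ∀ y : E, y ≠ 0 → Q (fun _ => y) < 0) :
    ∃ c > (0 : ℝ), ∀ y : E, Q (fun _ => y) ≤ -(c * ‖y‖ ^ 2) := by
  have hQ0 : Q (fun _ => (0 : E)) = 0 := Q.map_coord_zero 0 rfl
  rcases subsingleton_or_nontrivial E with hE | hE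
  · refine ⟨1, one_pos, fun y => ?_⟩
    simp [Subsingleton.elim y 0, hQ0]
  have hcont : Continuous fun y : E => Q (fun _ => y) :=
    Q.cont.comp (continuous_pi fun _ => continuous_id)
  obtain ⟨u, hu, hmax⟩ := (isCompact_sphere (0 : E) 1).exists_isMaxOn
    (NormedSpace.sphere_nonempty.2 zero_le_one) hcont.continuousOn
  have hu0 : u ≠ 0 := ne_zero_of_mem_unit_sphere ⟨u, hu⟩
  refine ⟨-Q (fun _ => u), neg_pos.2 (hQ u hu0), fun y => ?_⟩
  rcases eq_or_ne y 0 with rfl | hy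
  · simp [hQ0]
  have hy' : 0 < ‖y‖ := norm_pos_iff.2 hy
  have hhom : Q (fun _ => y) = ‖y‖ ^ 2 * Q (fun _ => ‖y‖⁻¹ • y) := by
    rw [Q.map_smul_univ (fun _ => ‖y‖⁻¹) (fun _ => y), Fin.prod_univ_two, smul_eq_mul]
    field_simp
  have hle : Q (fun _ => ‖y‖⁻¹ • y) ≤ Q (fun _ => u) :=
    hmax (by simp [norm_smul, inv_mul_cancel₀ hy'.ne'])
  rw [hhom]
  nlinarith [pow_pos hy' 2]

theorem HasFPowerSeriesAt.apply_diag_eq_iteratedFDeriv {F : E → ℝ} {x : E}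
    {ps : FormalMultilinearSeries ℝ E ℝ} (hps : HasFPowerSeriesAt F ps x) (n : ℕ) (y : E) :
    ps n (fun _ => y) = (n.factorial : ℝ)⁻¹ * iteratedFDeriv ℝ n F x (fun _ => y) := by
  obtain ⟨r, hr⟩ := hps
  rw [← hr.factorial_smul, nsmul_eq_mul, ← mul_assoc,
    inv_mul_cancel₀ (Nat.cast_ne_zero.2 n.factorial_ne_zero), one_mul]

theorem AnalyticAt.exists_pos_mul_norm_sq_le_sub [FiniteDimensional ℝ E] {F : E → ℝ} {x : E}
    (hF : AnalyticAt ℝ F x) (hd : fderiv ℝ F x = 0)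
    (hh : ∀ v : E, v ≠ 0 → iteratedFDeriv ℝ 2 F x ![v, v] < 0) :
    ∃ c > (0 : ℝ), ∀ᶠ y in 𝓝 0, c * ‖y‖ ^ 2 ≤ F x - F (x + y) := by
  obtain ⟨ps, hps⟩ := hF
  have hdiag : ∀ v : E, ![v, v] = fun _ => v := fun v => by ext i; fin_cases i <;> rfl
  have hps2 : ∀ y : E, y ≠ 0 → ps 2 (fun _ => y) < 0 := fun y hy => by
    rw [hps.apply_diag_eq_iteratedFDeriv, ← hdiag]
    exact mul_neg_of_pos_of_neg (by norm_num) (hh y hy)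
  obtain ⟨c, hc, hQ⟩ := (ps 2).exists_pos_apply_diag_le_neg_mul_norm_sq hps2
  have hsum : ∀ y : E, ps.partialSum 3 y = F x + ps 2 (fun _ => y) := fun y => by
    simp only [FormalMultilinearSeries.partialSum, Finset.sum_range_succ, Finset.sum_range_zero,
      hps.coeff_zero, hps.apply_diag_eq_iteratedFDeriv 1, iteratedFDeriv_one_apply, hd]
    simp
  -- `F (x + y) = F x + ps 2 (y, y) + O(‖y‖³)` and `ps 2 (y, y) = ½ D²F x (y, y) ≤ -c‖y‖²`.
  have hrem := ((hps.isBigO_sub_partialSum_pow 3).trans_isLittleO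
    (isLittleO_norm_pow_norm_pow (by norm_num : 2 < 3))).def (half_pos hc)
  refine ⟨c / 2, half_pos hc, hrem.mono fun y hy => ?_⟩
  rw [hsum, Real.norm_eq_abs, norm_pow, norm_norm] at hy
  nlinarith [abs_le.1 hy, hQ y]

theorem isBigO_div_sub_of_hessian_neg [FiniteDimensional ℝ E] {φ F : E → ℝ} {x : E}
    (hφ : DifferentiableAt ℝ φ x) (hφx : φ x = 0) (hF : AnalyticAt ℝ F x)
    (hd : fderiv ℝ F x = 0) (hh : ∀ v : E, v ≠ 0 → iteratedFDeriv ℝ 2 F x ![v, v] < 0) :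
    (fun y => φ (x + y) / (F x - F (x + y))) =O[𝓝 0] fun y => ‖y‖⁻¹ := by
  have htend : Tendsto (fun y : E => x + y) (𝓝 0) (𝓝 x) := by
    simpa using (continuous_const_add x).tendsto 0
  have hnum : (fun y => φ (x + y)) =O[𝓝 0] fun y => ‖y‖ := by
    simpa [Function.comp_def, hφx] using
      (hφ.hasFDerivAt.isBigO_sub.comp_tendsto htend).norm_right
  obtain ⟨c, hc, hquad⟩ := hF.exists_pos_mul_norm_sq_le_sub hd hh
  have hden : (fun y => (F x - F (x + y))⁻¹) =O[𝓝 0] fun y => (‖y‖ ^ 2)⁻¹ := by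
    refine IsBigO.of_bound c⁻¹ (hquad.mono fun y hy => ?_)
    rcases eq_or_ne y 0 with rfl | hy0
    · simp -- both sides are `0⁻¹ = 0`
    have hpos : 0 < c * ‖y‖ ^ 2 := by positivity
    rw [norm_inv, norm_inv, Real.norm_of_nonneg (hpos.le.trans hy), norm_pow, norm_norm,
      ← mul_inv]
    exact inv_anti₀ hpos hy
  refine (hnum.mul hden).congr (fun y => div_eq_mul_inv _ _) fun y => ?_
  rcases eq_or_ne ‖y‖ 0 with h | h
  · simp [h]
  · field_simp

end Analysis

section Integrability

variable {E : Type*} [NormedAddCommGroup E] [NormedSpace ℝ E] [FiniteDimensional ℝ E]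
  [MeasurableSpace E] [BorelSpace E] {μ : Measure E} [μ.IsAddHaarMeasure]

theorem integrableAtFilter_nhds_of_isBigO_norm_rpow {f : E → ℝ} {x : E} {α : ℝ}
    (hd : 1 ≤ Module.finrank ℝ E) (hα : α < Module.finrank ℝ E)
    (hf : AEStronglyMeasurable f μ) (hbig : (fun y => f (x + y)) =O[𝓝 0] fun y => ‖y‖ ^ (-α)) :
    IntegrableAtFilter f (𝓝 x) μ := by
  obtain ⟨C, hC⟩ := hbig.bound
  obtain ⟨r, hr, hball⟩ := Metric.eventually_nhds_iff_ball.1 hC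
  have hshift : MeasurePreserving (fun y : E => x + y) μ μ := measurePreserving_add_left μ x
  have hint : IntegrableOn (fun y => f (x + y)) (Metric.ball 0 r) μ := by
    refine integrableOn_ball_of_norm_le_rpow (C := C) hd hα
      ((ae_restrict_iff' Metric.isOpen_ball.measurableSet).2 (ae_of_all _ fun y hy => ?_))
      (hf.comp_measurePreserving hshift)
    simpa [Real.norm_of_nonneg (Real.rpow_nonneg (norm_nonneg y) _)] using hball y hy
  refine ⟨Metric.ball x r, Metric.ball_mem_nhds x hr, ?_⟩
  rwa [← hshift.integrableOn_comp_preimage (measurableEmbedding_addLeft x),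
    Metric.preimage_add_left_ball, neg_add_cancel]

theorem locallyIntegrable_sq_of_continuousAt_or_isBigO_inv_norm {f : E → ℝ}
    (hd : 2 < Module.finrank ℝ E) (hf : Measurable f)
    (h : ∀ x, ContinuousAt f x ∨ (fun y => f (x + y)) =O[𝓝 0] fun y => ‖y‖⁻¹) :
    LocallyIntegrable (fun x => f x ^ 2) μ := by
  intro x
  rcases h x with hcont | hpole
  · exact (hcont.pow 2).integrableAtFilter ⟨_, univ_mem, (hf.pow_const 2).aestronglyMeasurable⟩
      (μ.finiteAt_nhds x)
  · refine integrableAtFilter_nhds_of_isBigO_norm_rpow (α := 2) (by omega) (by exact_mod_cast hd)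
      (hf.pow_const 2).aestronglyMeasurable ((hpole.pow 2).congr_right fun y => ?_)
    rw [Real.rpow_neg (norm_nonneg y), inv_pow, Real.rpow_two]

end Integrability

lemma shift_zero : shift 0 = 0 := by
  funext i
  simp [shift]

theorem statement18_general
    (φ : 𝕋 → ℝ)
    (hφa : AnalyticOnNhd ℝ φ Set.univ)
    (hφper : ∀ (x : 𝕋) (v : Fin 3 → ℤ), φ (x + shift v) = φ x)
    (w : 𝕋 → 𝕋 → ℝ)
    (hwa : AnalyticOnNhd ℝ (fun x : 𝕋 × 𝕋 => w x.1 x.2) Set.univ)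
    (hwper : ∀ (p q : 𝕋) (v u : Fin 3 → ℤ), w (p + shift v) (q + shift u) = w p q)
    (p₀ : 𝕋)
    (δ : ℝ) (q0 : 𝕋 → 𝕋)
    (hq0max : ∀ p ∈ Metric.ball p₀ δ, ∀ q : 𝕋, w p q ≤ w p (q0 p))
    (hq0uniq : ∀ p ∈ Metric.ball p₀ δ, ∀ q : 𝕋, w p q = w p (q0 p) →
      ∃ v : Fin 3 → ℤ, q = q0 p + shift v)
    (hq0grad : ∀ p ∈ Metric.ball p₀ δ, fderiv ℝ (w p) (q0 p) = 0)
    (hq0hess : ∀ p ∈ Metric.ball p₀ δ, ∀ v : 𝕋, v ≠ 0 →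
      iteratedFDeriv ℝ 2 (w p) (q0 p) ![v, v] < 0)
    (p : 𝕋) (hp : p ∈ Metric.ball p₀ δ) (hφ0 : φ (q0 p) = 0) :
    MemLp (fun q => φ q / (w p (q0 p) - w p q)) 2 (volume.restrict box) := by
  set f : 𝕋 → ℝ := fun q => φ q / (w p (q0 p) - w p q)
  have hwp : ∀ q, AnalyticAt ℝ (w p) q := fun q =>
    (hwa (p, q) trivial).comp (analyticAt_const.prod analyticAt_id)
  have hwc : Continuous (w p) := continuous_iff_continuousAt.2 fun q => (hwp q).continuousAt
  have hφc : Continuous φ := hφa.continuous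
  have hfm : Measurable f := hφc.measurable.div (continuous_const.sub hwc).measurable
  have hfper : ∀ q v, f (q + shift v) = f q := fun q v => by
    simp only [f, hφper, ← hwper p q 0 v, shift_zero, add_zero]
  have hpole : (fun y => f (q0 p + y)) =O[𝓝 0] fun y => ‖y‖⁻¹ :=
    isBigO_div_sub_of_hessian_neg (hφa _ trivial).differentiableAt hφ0 (hwp _)
      (hq0grad p hp) (hq0hess p hp)
  have hloc : LocallyIntegrable (fun q => f q ^ 2) volume := by
    refine locallyIntegrable_sq_of_continuousAt_or_isBigO_inv_norm (by simp) hfm fun x => ?_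
    rcases (hq0max p hp x).lt_or_eq with hlt | hmax
    · exact .inl (hφc.continuousAt.div (continuousAt_const.sub hwc.continuousAt)
        (sub_ne_zero.2 hlt.ne'))
    · obtain ⟨v, rfl⟩ := hq0uniq p hp x hmax
      exact .inr (hpole.congr_left fun y => by rw [add_right_comm, hfper])
  have hbox : box ⊆ Set.univ.pi fun _ => Set.Icc (-π) π :=
    Set.pi_mono fun _ _ => Set.Ioc_subset_Icc_self
  rw [memLp_two_iff_integrable_sq hfm.aestronglyMeasurable]
  exact (hloc.integrableOn_isCompact (isCompact_univ_pi fun _ => isCompact_Icc)).mono_set hbox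

/-- Let `p ∈ U_δ(p₀)`.  If `φ(q0 p) = 0`, then
`f(q) = φ(q)/(M(p) − w_p(q))` belongs to `L²(T³)`. -/
theorem statement18
    (φ : 𝕋 → ℝ)
    (hφa : AnalyticOnNhd ℝ φ Set.univ)
    (hφper : ∀ (x : 𝕋) (v : Fin 3 → ℤ), φ (x + shift v) = φ x)
    (hφnt : φ ≠ 0)
    (w : 𝕋 → 𝕋 → ℝ)
    (hwa : AnalyticOnNhd ℝ (fun x : 𝕋 × 𝕋 => w x.1 x.2) Set.univ)
    (hwper : ∀ (p q : 𝕋) (v u : Fin 3 → ℤ), w (p + shift v) (q + shift u) = w p q)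
    (p₀ q₀ : 𝕋)
    (hmax : ∀ p q : 𝕋, w p q ≤ w p₀ q₀)
    (huniq : ∀ p q : 𝕋, w p q = w p₀ q₀ →
      ∃ v u : Fin 3 → ℤ, p = p₀ + shift v ∧ q = q₀ + shift u)
    (hgrad : fderiv ℝ (fun x : 𝕋 × 𝕋 => w x.1 x.2) (p₀, q₀) = 0)
    (hhess : ∀ v : 𝕋 × 𝕋, v ≠ 0 →
      iteratedFDeriv ℝ 2 (fun x : 𝕋 × 𝕋 => w x.1 x.2) (p₀, q₀) ![v, v] < 0)
    (δ : ℝ) (hδ : 0 < δ) (q0 : 𝕋 → 𝕋)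
    (hq0a : AnalyticOnNhd ℝ q0 (Metric.ball p₀ δ))
    (hq0max : ∀ p ∈ Metric.ball p₀ δ, ∀ q : 𝕋, w p q ≤ w p (q0 p))
    (hq0uniq : ∀ p ∈ Metric.ball p₀ δ, ∀ q : 𝕋, w p q = w p (q0 p) →
      ∃ v : Fin 3 → ℤ, q = q0 p + shift v)
    (hq0grad : ∀ p ∈ Metric.ball p₀ δ, fderiv ℝ (w p) (q0 p) = 0)
    (hq0hess : ∀ p ∈ Metric.ball p₀ δ, ∀ v : 𝕋, v ≠ 0 →
      iteratedFDeriv ℝ 2 (w p) (q0 p) ![v, v] < 0)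
    (p : 𝕋) (hp : p ∈ Metric.ball p₀ δ) (hφ0 : φ (q0 p) = 0) :
    MemLp (fun q => φ q / (w p (q0 p) - w p q)) 2 (volume.restrict box) :=
  statement18_general φ hφa hφper w hwa hwper p₀ δ q0 hq0max hq0uniq hq0grad hq0hess p hp hφ0
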